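/- arXiv:2602.19529 — 3 statements merged into one kernel-verified Lean document; each statement's English description precedes it below -/
import Mathlib

section
/- Let G be a group acting by homeomorphisms on a compact metrizable space M as a non-elementary convergence group. If there exist an element f ∈ G and an open set U ⊂ M such that the image of the closure of U under f is a proper subset of U, then f is a hyperbolic element (i.e., f has infinite order and exactly two fixed points in M). -/
open Filter Topology Set

/-- A (discrete) group `G` acting by homeomorphisms on a compact metrizable space `M`
is a *convergence group* if every sequence of distinct elements has a subsequence
converging locally uniformly to a constant off a point. -/
def ConvergenceAction (G : Type*) (M : Type*) [Group G] [MetricSpace M] [CompactSpace M]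
    [MulAction G M] [ContinuousConstSMul G M] : Prop :=
  ∀ g : ℕ → G, Function.Injective g →
    ∃ (k : ℕ → ℕ) (a b : M), StrictMono k ∧
      TendstoLocallyUniformlyOn (fun n x => g (k n) • x) (fun _ => b) atTop {a}ᶜ

/-- The limit set: accumulation points of orbits along sequences of distinct elements. -/
def limitSet (G : Type*) (M : Type*) [Group G] [MetricSpace M] [CompactSpace M]
    [MulAction G M] : Set M :=
  {x | ∃ (y : M) (g : ℕ → G), Function.Injective g ∧
    Tendsto (fun n => g n • y) atTop (𝓝 x)}

/-- The action is non-elementary if the limit set has more than two points. -/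
def NonElementaryAction (G : Type*) (M : Type*) [Group G] [MetricSpace M] [CompactSpace M]
    [MulAction G M] : Prop :=
  ∃ a ∈ limitSet G M, ∃ b ∈ limitSet G M, ∃ c ∈ limitSet G M, a ≠ b ∧ b ≠ c ∧ a ≠ c

/-!
Since `f` maps the compact set `closure U` strictly into itself, it has infinite order, so the
convergence property gives powers `f ^ k n` converging to a point `b` locally uniformly off a
point `a`. As `f` commutes with its powers, conjugating by `f` shows that `(f • a, f • b)` is
again such a pair, and the pair is unique as soon as `M` has three points; hence `a` and `b`
are fixed. Any other fixed point `x` would satisfy `x = f ^ k n • x → b`. Finally `a ≠ b`: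
the nested intersections `⋂ f ^ n • closure U ⊆ U` and `⋂ f ^ -n • Uᶜ ⊆ Uᶜ` are disjoint
nonempty compact `f`-invariant sets, and such a set avoiding `a` must equal `{b}`.
-/

open Pointwise

universe u v w

section SmulDynamics

variable {G : Type u} {M : Type v} [Group G] [MulAction G M]

lemma not_isOfFinOrder_of_smul_set_ssubset {g : G} {S : Set M} (h : g • S ⊂ S) :
    ¬ IsOfFinOrder g := by
  intro hfin
  obtain ⟨n, hn, hgn⟩ := isOfFinOrder_iff_pow_eq_one.mp hfin
  have hpow : ∀ m : ℕ, g ^ m • S ⊆ S := by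
    intro m
    induction m with
    | zero => simp
    | succ m ih => rw [pow_succ, mul_smul]; exact (smul_set_mono h.subset).trans ih
  refine h.2 ?_
  calc S = g ^ (n - 1 + 1) • S := by rw [Nat.sub_add_cancel hn, hgn, one_smul]
    _ = g • g ^ (n - 1) • S := by rw [pow_succ', mul_smul]
    _ ⊆ g • S := smul_set_mono (hpow _)

lemma exists_nonempty_isCompact_smul_set_eq_subset [TopologicalSpace M] [T2Space M]
    [ContinuousConstSMul G M] {g : G} {C : Set M} (hC : IsCompact C) (hne : C.Nonempty)
    (hgC : g • C ⊆ C) :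
    ∃ K : Set M, K.Nonempty ∧ IsCompact K ∧ K ⊆ g • C ∧ g • K = K := by
  set T : ℕ → Set M := fun n => g ^ n • C
  have hanti : Antitone T := antitone_nat_of_succ_le fun n => by
    simp only [T, pow_succ, mul_smul]
    exact smul_set_mono hgC
  have hcpt : ∀ n, IsCompact (T n) := fun n => hC.smul _
  refine ⟨⋂ n, T n, ?_, ?_, ?_, ?_⟩
  · exact IsCompact.nonempty_iInter_of_sequence_nonempty_isCompact_isClosed T
      (fun n => hanti n.le_succ) (fun _ => hne.smul_set) (hcpt 0) (fun n => (hcpt n).isClosed)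
  · exact (hcpt 0).of_isClosed_subset (isClosed_iInter fun n => (hcpt n).isClosed)
      (iInter_subset T 0)
  · simpa [T] using iInter_subset T 1
  · rw [smul_set_iInter]
    simp_rw [T, smul_smul, ← pow_succ']
    exact hanti.iInter_nat_add 1

lemma NonElementaryAction.exists_ne_and_ne [MetricSpace M] [CompactSpace M]
    (h : NonElementaryAction G M) (c d : M) : ∃ x, x ≠ c ∧ x ≠ d := by
  obtain ⟨p, -, q, -, r, -, hpq, hqr, hpr⟩ := h
  by_contra! hcd
  rcases eq_or_ne p c with rfl | hp
  · exact hqr ((hcd q hpq.symm).trans (hcd r hpr.symm).symm)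
  · have hpd := hcd p hp
    rcases eq_or_ne q c with rfl | hq
    · exact hpr (hpd.trans (hcd r hqr.symm).symm)
    · exact hpq (hpd.trans (hcd q hq).symm)

section Convergence

variable {ι : Type w} {G : Type u} {M : Type v} [Group G] [MulAction G M] [UniformSpace M]
  {l : Filter ι} {g : ι → G} {a b : M}

lemma eq_singleton_of_tendstoUniformlyOn_smul [T0Space M] [l.NeBot] {C : Set M}
    (hg : TendstoUniformlyOn (fun i x => g i • x) (fun _ => b) l C) (hne : C.Nonempty)
    (hinv : ∀ i, C ⊆ g i • C) : C = {b} := by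
  refine hne.subset_singleton_iff.mp fun x hx => ?_
  refine (eq_of_uniformity fun hV => ?_).symm
  obtain ⟨i, hi⟩ := (hg _ hV).exists
  obtain ⟨y, hy, rfl⟩ := hinv i hx
  exact hi y hy

lemma mem_or_eq_singleton_of_tendstoLocallyUniformlyOn_smul [T0Space M] [l.NeBot] {C : Set M}
    (hg : TendstoLocallyUniformlyOn (fun i x => g i • x) (fun _ => b) l {a}ᶜ)
    (hC : IsCompact C) (hne : C.Nonempty) (hinv : ∀ i, C ⊆ g i • C) : a ∈ C ∨ C = {b} := by
  refine or_iff_not_imp_left.mpr fun haC => ?_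
  refine eq_singleton_of_tendstoUniformlyOn_smul (l := l) ?_ hne hinv
  exact (tendstoLocallyUniformlyOn_iff_tendstoUniformlyOn_of_compact hC).mp
    (hg.mono (subset_compl_singleton_iff.mpr haC))

lemma ne_of_tendstoLocallyUniformlyOn_smul_of_disjoint [T0Space M] [l.NeBot] {K K' : Set M}
    (hg : TendstoLocallyUniformlyOn (fun i x => g i • x) (fun _ => b) l {a}ᶜ)
    (hK : IsCompact K) (hK' : IsCompact K') (hKne : K.Nonempty) (hK'ne : K'.Nonempty)
    (hKinv : ∀ i, K ⊆ g i • K) (hK'inv : ∀ i, K' ⊆ g i • K') (hKK' : Disjoint K K') :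
    a ≠ b := by
  rintro rfl
  have hmem : ∀ C : Set M, IsCompact C → C.Nonempty → (∀ i, C ⊆ g i • C) → a ∈ C := by
    intro C hC hne hinv
    rcases mem_or_eq_singleton_of_tendstoLocallyUniformlyOn_smul hg hC hne hinv with haC | rfl
    exacts [haC, rfl]
  exact hKK'.ne_of_mem (hmem K hK hKne hKinv) (hmem K' hK' hK'ne hK'inv) rfl

lemma TendstoLocallyUniformlyOn.conj_smul [CompactSpace M] [ContinuousConstSMul G M]
    (hg : TendstoLocallyUniformlyOn (fun i x => g i • x) (fun _ => b) l {a}ᶜ) (c : G) :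
    TendstoLocallyUniformlyOn (fun i x => (c * g i * c⁻¹) • x) (fun _ => c • b) l {c • a}ᶜ := by
  have hinner := hg.comp (t := {c • a}ᶜ) (c⁻¹ • ·)
    (fun x hx => by simpa [inv_smul_eq_iff] using hx) (continuous_const_smul _).continuousOn
  simp_rw [mul_smul]
  exact (CompactSpace.uniformContinuous_of_continuous
    (continuous_const_smul c)).comp_tendstoLocallyUniformlyOn hinner

lemma eq_and_eq_of_tendstoLocallyUniformlyOn_smul [T2Space M] [CompactSpace M] [l.NeBot]
    {a' b' x : M}
    (hg : TendstoLocallyUniformlyOn (fun i x => g i • x) (fun _ => b) l {a}ᶜ)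
    (hg' : TendstoLocallyUniformlyOn (fun i x => g i • x) (fun _ => b') l {a'}ᶜ)
    (hxa : x ≠ a) (hxa' : x ≠ a') : a = a' ∧ b = b' := by
  obtain rfl : b = b' := tendsto_nhds_unique (hg.tendsto_at hxa) (hg'.tendsto_at hxa')
  refine ⟨by_contra fun haa' => ?_, rfl⟩
  -- Otherwise the convergence is uniform on all of `M`, and as every `g i` is onto, `M = {b}`.
  have hcover : {a}ᶜ ∪ {a'}ᶜ = (univ : Set M) := by
    rw [← compl_inter, singleton_inter_eq_empty.mpr (mt mem_singleton_iff.mp haa'), compl_empty]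
  have huniv : TendstoUniformlyOn (fun i x => g i • x) (fun _ => b) l univ :=
    (tendstoLocallyUniformlyOn_iff_tendstoUniformlyOn_of_compact isCompact_univ).mp
      (hcover ▸ hg.union isOpen_compl_singleton isOpen_compl_singleton hg')
  have hb := eq_singleton_of_tendstoUniformlyOn_smul huniv ⟨x, trivial⟩
    fun i => (smul_set_univ).superset
  exact hxa ((hb ▸ subsingleton_singleton) trivial trivial)

lemma setOf_smul_eq_self_subset_of_tendsto_pow_smul [T2Space M] [l.NeBot] {f : G} {k : ι → ℕ}
    (hg : ∀ x ≠ a, Tendsto (fun i => f ^ k i • x) l (𝓝 b)) :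
    {x : M | f • x = x} ⊆ {a, b} := by
  intro x hx
  refine or_iff_not_imp_left.mpr fun hxa => tendsto_nhds_unique (l := l) tendsto_const_nhds ?_
  have hfix : ∀ i, f ^ k i • x = x := fun i => (MulAction.stabilizer G x).pow_mem hx _
  simpa only [hfix] using hg x hxa

lemma smul_eq_self_of_tendstoLocallyUniformlyOn_pow_smul [T2Space M] [CompactSpace M]
    [ContinuousConstSMul G M] [l.NeBot] {f : G} {k : ι → ℕ} {x : M}
    (hk : TendstoLocallyUniformlyOn (fun i x => f ^ k i • x) (fun _ => b) l {a}ᶜ)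
    (hxa : x ≠ a) (hxfa : x ≠ f • a) : f • a = a ∧ f • b = b := by
  have hconj := hk.conj_smul f
  simp_rw [(Commute.self_pow f _).mul_inv_cancel] at hconj
  obtain ⟨ha, hb⟩ := eq_and_eq_of_tendstoLocallyUniformlyOn_smul hk hconj hxa hxfa
  exact ⟨ha.symm, hb.symm⟩

lemma ne_of_tendstoLocallyUniformlyOn_pow_smul [T2Space M] [CompactSpace M]
    [ContinuousConstSMul G M] [l.NeBot] {f : G} {k : ι → ℕ} {U : Set M}
    (hk : TendstoLocallyUniformlyOn (fun i x => f ^ k i • x) (fun _ => b) l {a}ᶜ)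
    (hU : IsOpen U) (hsub : f • closure U ⊂ U) : a ≠ b := by
  have hUc : f⁻¹ • Uᶜ ⊆ Uᶜ := by
    rw [smul_set_compl, compl_subset_compl, subset_smul_set_iff, inv_inv]
    exact (smul_set_mono subset_closure).trans hsub.subset
  obtain ⟨K, hKne, hK, hKU, hfK⟩ := exists_nonempty_isCompact_smul_set_eq_subset
    isClosed_closure.isCompact (nonempty_of_ssubset' hsub).closure
    (hsub.subset.trans subset_closure)
  obtain ⟨K', hK'ne, hK', hK'U, hfK'⟩ := exists_nonempty_isCompact_smul_set_eq_subset
    hU.isClosed_compl.isCompact (nonempty_compl.mpr fun h => by simp [h] at hsub) hUc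
  have hfK'' : f ∈ MulAction.stabilizer G K' := (Subgroup.inv_mem_iff _).mp hfK'
  exact ne_of_tendstoLocallyUniformlyOn_smul_of_disjoint hk hK hK' hKne hK'ne
    (fun i => ((MulAction.stabilizer G K).pow_mem hfK _).superset)
    (fun i => ((MulAction.stabilizer G K').pow_mem hfK'' _).superset)
    (disjoint_compl_right.mono (hKU.trans hsub.subset) (hK'U.trans hUc))

end Convergence

/-- If `f (closure U) ⊊ U` for some open `U`, then `f` is hyperbolic: it has infinite
order and exactly two fixed points in `M`. -/
theorem stmt0 {G M : Type*} [Group G] [MetricSpace M] [CompactSpace M]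
    [MulAction G M] [ContinuousConstSMul G M]
    (hconv : ConvergenceAction G M) (hne : NonElementaryAction G M)
    (f : G) (U : Set M) (hU : IsOpen U) (hsub : (f • ·) '' closure U ⊂ U) :
    ¬ IsOfFinOrder f ∧ ∃ a b : M, a ≠ b ∧ {x : M | f • x = x} = {a, b} := by
  rw [image_smul] at hsub
  have hfin : ¬ IsOfFinOrder f :=
    not_isOfFinOrder_of_smul_set_ssubset (hsub.trans_subset subset_closure)
  obtain ⟨k, a, b, -, hk⟩ := hconv (f ^ ·) (injective_pow_iff_not_isOfFinOrder.mpr hfin)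
  obtain ⟨x, hxa, hxfa⟩ := hne.exists_ne_and_ne a (f • a)
  obtain ⟨hfa, hfb⟩ := smul_eq_self_of_tendstoLocallyUniformlyOn_pow_smul hk hxa hxfa
  refine ⟨hfin, a, b, ne_of_tendstoLocallyUniformlyOn_pow_smul hk hU hsub, ?_⟩
  refine (setOf_smul_eq_self_subset_of_tendsto_pow_smul fun y hy => hk.tendsto_at hy).antisymm ?_
  rintro y (rfl | rfl)
  exacts [hfa, hfb]
end SmulDynamics
end

section
/- Let G act properly on a proper δ-hyperbolic space X, let ξ be a non-conical limit point, and let R_ξ satisfy d([ξ, gξ], G·o) ≤ R_ξ for every g ∈ G with gξ ≠ ξ. Then for every R > R_ξ + 2δ and every g ∈ G with gξ ≠ ξ, the sets B_{ξ,R} and B_{gξ,R} are disjoint, where B_{η,R} = { x ∈ X : some geodesic ray [x, η] satisfies d([x,η], G·o) ≥ R }. -/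
/-!
If `x` lay in both sets, the rays from `x` to `ξ` and to `gξ` would stay `R`-far from the orbit.
But the line `[ξ, gξ]` comes within `R_ξ` of the orbit, and by thinness of the ideal triangle
with vertices `x, ξ, gξ` that point is `2δ`-close to one of the two rays, which therefore comes
within `R_ξ + 2δ < R` of the orbit.
-/

open Metric Set Filter Topology

/-- The orbit `G·o` of the basepoint. -/
def orbitSet {X G : Type*} [MetricSpace X] [Group G] (φ : G →* (X ≃ᵢ X)) (o : X) : Set X :=
  range fun g => φ g o

/-- `ξ` is a conical limit point: some geodesic ray toward `ξ` has points at bounded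
distance from the orbit at arbitrarily large times.  Here `RayTo r ξ` means that `r`
(restricted to `[0,∞)`) is a geodesic ray with endpoint `ξ` at infinity. -/
def ConicalPt {X G Bd : Type*} [MetricSpace X] [Group G] (φ : G →* (X ≃ᵢ X)) (o : X)
    (RayTo : (ℝ → X) → Bd → Prop) (ξ : Bd) : Prop :=
  ∃ r : ℝ → X, RayTo r ξ ∧ ∃ R > (0:ℝ), ∀ T : ℝ, ∃ t ≥ T, infDist (r t) (orbitSet φ o) ≤ R

/-- `B_{ξ,R}`: the set of points from which some geodesic ray to `ξ` stays at distance
at least `R` from the orbit `G·o`. -/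
def Bset {X G Bd : Type*} [MetricSpace X] [Group G] (φ : G →* (X ≃ᵢ X)) (o : X)
    (RayTo : (ℝ → X) → Bd → Prop) (ξ : Bd) (R : ℝ) : Set X :=
  {x | ∃ r : ℝ → X, RayTo r ξ ∧ r 0 = x ∧ ∀ t ≥ (0:ℝ), R ≤ infDist (r t) (orbitSet φ o)}

theorem exists_infDist_lt_of_infDist_add_infDist_lt {α : Type*} [PseudoMetricSpace α]
    {y : α} {A S : Set α} {R : ℝ} (hA : A.Nonempty) (h : infDist y S + infDist y A < R) :
    ∃ a ∈ A, infDist a S < R := by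
  obtain ⟨a, ha, hya⟩ := (infDist_lt_iff hA).mp (by linarith : infDist y A < R - infDist y S)
  refine ⟨a, ha, ?_⟩
  linarith [infDist_le_infDist_add_dist (x := a) (y := y) (s := S), dist_comm a y]

theorem stmt11_general {X G Bd : Type*} [MetricSpace X] [Group G] [MulAction G Bd]
    (φ : G →* (X ≃ᵢ X)) (o : X) (δ : ℝ)
    (RayTo : (ℝ → X) → Bd → Prop) (LineTo : (ℝ → X) → Bd → Bd → Prop)
    (hline_ex : ∀ ξ η : Bd, ξ ≠ η → ∃ ℓ : ℝ → X, LineTo ℓ ξ η)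
    (hthin : ∀ (x : X) (ξ η : Bd) (r₁ r₂ ℓ : ℝ → X), RayTo r₁ ξ → RayTo r₂ η →
      r₁ 0 = x → r₂ 0 = x → LineTo ℓ ξ η →
      ∀ s : ℝ, infDist (ℓ s) ((r₁ '' Ici 0) ∪ (r₂ '' Ici 0)) ≤ 2 * δ)
    (ξ : Bd) (Rξ : ℝ)
    (hRξ : ∀ g : G, g • ξ ≠ ξ → ∀ ℓ : ℝ → X, LineTo ℓ ξ (g • ξ) →
      ∃ t : ℝ, infDist (ℓ t) (orbitSet φ o) ≤ Rξ)
    (R : ℝ) (hR : Rξ + 2 * δ < R) (g : G) (hg : g • ξ ≠ ξ) :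
    Disjoint (Bset φ o RayTo ξ R) (Bset φ o RayTo (g • ξ) R) := by
  rw [disjoint_left]
  rintro x ⟨r₁, hr₁, rfl, h₁⟩ ⟨r₂, hr₂, h₂0, h₂⟩
  obtain ⟨ℓ, hℓ⟩ := hline_ex ξ (g • ξ) hg.symm
  obtain ⟨t, ht⟩ := hRξ g hg ℓ hℓ
  have hclose := hthin _ ξ (g • ξ) r₁ r₂ ℓ hr₁ hr₂ rfl h₂0 hℓ t
  have hrays : (r₁ '' Ici 0 ∪ r₂ '' Ici 0).Nonempty :=
    ⟨r₁ 0, .inl (mem_image_of_mem r₁ self_mem_Ici)⟩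
  obtain ⟨p, hp, hpR⟩ := exists_infDist_lt_of_infDist_add_infDist_lt hrays
    (by linarith : infDist (ℓ t) (orbitSet φ o) + _ < R)
  rcases hp with ⟨s, hs, rfl⟩ | ⟨s, hs, rfl⟩
  · exact (h₁ s hs).not_gt hpR
  · exact (h₂ s hs).not_gt hpR

/-- Disjointness of the sets `B_{ξ,R}` and `B_{gξ,R}` for `R > R_ξ + 2δ`, where every
bi-infinite geodesic `[ξ, gξ]` passes within `R_ξ` of the orbit and ideal triangles are
`2δ`-thin.  `LineTo ℓ ξ η` means `ℓ` is a bi-infinite geodesic from `ξ` to `η`. -/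
theorem stmt11 {X G Bd : Type*} [MetricSpace X] [ProperSpace X] [Group G] [MulAction G Bd]
    (φ : G →* (X ≃ᵢ X)) (o : X) (δ : ℝ) (hδ : 0 ≤ δ)
    (RayTo : (ℝ → X) → Bd → Prop) (LineTo : (ℝ → X) → Bd → Bd → Prop)
    (hline_ex : ∀ ξ η : Bd, ξ ≠ η → ∃ ℓ : ℝ → X, LineTo ℓ ξ η)
    (hthin : ∀ (x : X) (ξ η : Bd) (r₁ r₂ ℓ : ℝ → X), RayTo r₁ ξ → RayTo r₂ η →
      r₁ 0 = x → r₂ 0 = x → LineTo ℓ ξ η →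
      ∀ s : ℝ, infDist (ℓ s) ((r₁ '' Ici 0) ∪ (r₂ '' Ici 0)) ≤ 2 * δ)
    (ξ : Bd) (hξ : ¬ ConicalPt φ o RayTo ξ) (Rξ : ℝ)
    (hRξ : ∀ g : G, g • ξ ≠ ξ → ∀ ℓ : ℝ → X, LineTo ℓ ξ (g • ξ) →
      ∃ t : ℝ, infDist (ℓ t) (orbitSet φ o) ≤ Rξ)
    (R : ℝ) (hR : Rξ + 2 * δ < R) (g : G) (hg : g • ξ ≠ ξ) :
    Disjoint (Bset φ o RayTo ξ R) (Bset φ o RayTo (g • ξ) R) :=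
  stmt11_general φ o δ RayTo LineTo hline_ex hthin ξ Rξ hRξ R hR g hg
end

section
/- In a geodesic δ-hyperbolic space X with basepoint o and a group G acting by isometries, suppose p and q are points with d(p, o) = d(p, G·o) and d(q, o) = d(q, G·o). Then every point x on a geodesic [p, q] satisfies d(x, G·o) ≥ d(x, o) − 2δ. -/
open Metric Set Filter Topology

/-- A geodesic segment from `x` to `y`: the image of an isometric parametrization of
`[0, dist x y]`. -/
def IsGeodesicSegment {X : Type*} [MetricSpace X] (s : Set X) (x y : X) : Prop :=
  ∃ f : ℝ → X, f 0 = x ∧ f (dist x y) = y ∧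
    (∀ a ∈ Icc (0:ℝ) (dist x y), ∀ b ∈ Icc (0:ℝ) (dist x y), dist (f a) (f b) = |a - b|) ∧
    s = f '' Icc (0:ℝ) (dist x y)

/-- A bi-infinite geodesic line: the image of an isometric embedding of `ℝ`. -/
def IsGeodesicLine {X : Type*} [MetricSpace X] (γ : Set X) : Prop :=
  ∃ f : ℝ → X, Isometry f ∧ γ = range f

/-- `δ`-hyperbolicity via thin triangles: every side of a geodesic triangle is contained
in the `δ`-neighborhood of the union of the other two sides. -/
def ThinTriangles (X : Type*) [MetricSpace X] (δ : ℝ) : Prop :=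
  ∀ (x y z : X) (s t u : Set X), IsGeodesicSegment s x y → IsGeodesicSegment t y z →
    IsGeodesicSegment u z x → s ⊆ cthickening δ (t ∪ u)


private lemma seg_compact' {X : Type*} [MetricSpace X] {s : Set X} {x y : X}
    (h : IsGeodesicSegment s x y) : IsCompact s ∧ s.Nonempty := by
  obtain ⟨f, hf0, hfD, hiso, rfl⟩ := h
  constructor
  · apply isCompact_Icc.image_of_continuousOn
    apply LipschitzOnWith.continuousOn (K := 1)
    intro a ha b hb
    rw [edist_dist, edist_dist, hiso a ha b hb]
    simp [Real.dist_eq]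
  · exact ⟨x, ⟨0, ⟨le_refl _, dist_nonneg⟩, hf0⟩⟩

private lemma seg_add' {X : Type*} [MetricSpace X] {s : Set X} {a b : X}
    (h : IsGeodesicSegment s a b) : ∀ y ∈ s, dist a y + dist y b = dist a b := by
  obtain ⟨f, hf0, hfD, hiso, rfl⟩ := h
  rintro y ⟨c, hc, rfl⟩
  have h1 := hiso 0 ⟨le_refl 0, dist_nonneg⟩ c hc
  have h2 := hiso c hc (dist a b) ⟨dist_nonneg, le_refl _⟩
  rw [hf0] at h1
  rw [hfD] at h2
  rw [h1, h2, abs_sub_comm, sub_zero, abs_of_nonneg hc.1,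
    abs_of_nonpos (by linarith [hc.2] : c - dist a b ≤ 0)]
  ring

private lemma near_orbit' {X : Type*} [MetricSpace X] {A : Set X} {o a y : X}
    (ho : o ∈ A) (ha : dist a o = infDist a A)
    (hy : dist a y + dist y o = dist a o) :
    dist y o ≤ infDist y A := by
  by_contra hcon
  push_neg at hcon
  obtain ⟨z, hz, hlt⟩ := (infDist_lt_iff ⟨o, ho⟩).mp hcon
  have h1 : infDist a A ≤ dist a z := infDist_le_dist_of_mem hz
  have h2 : dist a z ≤ dist a y + dist y z := dist_triangle a y z
  linarith

/-- If `o` is a nearest point of the orbit `G·o` to both `p` and `q`, then every point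
`x` on a geodesic `[p, q]` satisfies `d(x, G·o) ≥ d(x, o) − 2δ`. -/
theorem stmt14 {X G : Type*} [MetricSpace X] [Group G] (δ : ℝ) (hδ : 0 ≤ δ)
    (hthin : ThinTriangles X δ)
    (hgeo : ∀ x y : X, ∃ s : Set X, IsGeodesicSegment s x y)
    (φ : G →* (X ≃ᵢ X)) (o p q : X)
    (hp : dist p o = infDist p (range fun g => φ g o))
    (hq : dist q o = infDist q (range fun g => φ g o))
    (s : Set X) (hs : IsGeodesicSegment s p q) :
    ∀ x ∈ s, dist x o - 2 * δ ≤ infDist x (range fun g => φ g o) := by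
  intro x hx
  set A := (range fun g : G => φ g o) with hA
  have hoA : o ∈ A := ⟨1, by simp⟩
  obtain ⟨t, ht⟩ := hgeo q o
  obtain ⟨u, hu⟩ := hgeo o p
  have hsub := hthin p q o s t u hs ht hu
  have hcomp : IsCompact (t ∪ u) := (seg_compact' ht).1.union (seg_compact' hu).1
  have hne : (t ∪ u).Nonempty := (seg_compact' ht).2.mono subset_union_left
  have hle : infDist x (t ∪ u) ≤ δ := by
    have h := mem_cthickening_iff.mp (hsub hx)
    calc Metric.infDist x (t ∪ u) = (EMetric.infEdist x (t ∪ u)).toReal := rfl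
      _ ≤ (ENNReal.ofReal δ).toReal := ENNReal.toReal_mono ENNReal.ofReal_ne_top h
      _ = δ := ENNReal.toReal_ofReal hδ
  obtain ⟨y, hy, hxy⟩ := hcomp.exists_infDist_eq_dist hne x
  have hdxy : dist x y ≤ δ := by rw [← hxy]; exact hle
  have hkey : dist y o ≤ infDist y A := by
    rcases hy with hy | hy
    · exact near_orbit' hoA hq (seg_add' ht y hy)
    · have := seg_add' hu y hy
      refine near_orbit' hoA hp ?_
      have h1 : dist p y = dist y p := dist_comm p y
      have h2 : dist o y = dist y o := dist_comm o y
      have h3 : dist o p = dist p o := dist_comm o p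
      linarith
  have h4 : infDist x A ≥ infDist y A - dist y x :=
    by linarith [infDist_le_infDist_add_dist (x := y) (y := x) (s := A)]
  have h5 : dist x o ≤ dist x y + dist y o := dist_triangle x y o
  have h6 : dist y x = dist x y := dist_comm y x
  linarith
end
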